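/- arXiv:2002.11642 — 4 statements merged into one kernel-verified Lean document; each statement's English description precedes it below -/
import Mathlib

section
/- With f(a,x)=E[Y|A=a,X=x] and v(z)=E_{π_e(a|z)}[f(a,z)], the doubly robust identity holds: for any bounded measurable functions f† and (r†,w†), E_{hist}[r†(X)w†(A,X)(Y − f†(A,X))] + E_{Z∼q}[v†(Z)] = R(π_e), provided either (i) r†(x)w†(a,x) = r(x)w(a,x) for all (a,x), or (ii) f†(a,x) = f(a,x) for all (a,x), where v†(z)=E_{π_e(a|z)}[f†(a,z)]. -/
/-! Integrating out `y` turns the residual term at `(a, x)` into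
`r† w† · p πb · (f − f†)`. If `r† w† = r w` this weight is `πe q`, and the term cancels
the bias of the plug-in term `πe f† q`; if `f† = f` it vanishes. -/

open MeasureTheory

theorem integral_sub_mul_of_integral_eq_one {ν : Measure ℝ} {g : ℝ → ℝ}
    (hg : Integrable g ν) (hyg : Integrable (fun y => y * g y) ν) (hg1 : ∫ y, g y ∂ν = 1)
    (m : ℝ) : ∫ y, (y - m) * g y ∂ν = (∫ y, y * g y ∂ν) - m := by
  simp_rw [sub_mul]
  rw [integral_sub hyg (hg.const_mul m), integral_const_mul, hg1, mul_one]

theorem doubly_robust_identity_general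
    {𝒳 : Type*} [MeasurableSpace 𝒳] {A : Type*} [Fintype A]
    (μ : Measure 𝒳) (ν : Measure ℝ)
    (p q : 𝒳 → ℝ) (πb πe : A → 𝒳 → ℝ) (pden : A → 𝒳 → ℝ → ℝ)
    (hp : ∀ x, 0 < p x)
    (hπb : ∀ a x, 0 < πb a x)
    (hpden : ∀ a x, (∀ y, 0 ≤ pden a x y) ∧ (∫ y, pden a x y ∂ν) = 1)
    (r : 𝒳 → ℝ) (hr : ∀ x, r x = q x / p x)
    (w : A → 𝒳 → ℝ) (hw : ∀ a x, w a x = πe a x / πb a x)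
    (f : A → 𝒳 → ℝ) (hf : ∀ a x, f a x = ∫ y, y * pden a x y ∂ν)
    (fd : A → 𝒳 → ℝ) (rd : 𝒳 → ℝ) (wd : A → 𝒳 → ℝ)
    (hYint : ∀ a x, Integrable (fun y => y * pden a x y) ν)
    (hYint' : ∀ a x, Integrable (fun y => pden a x y) ν)
    (hint1 : Integrable
      (fun x => ∑ a, ∫ y, rd x * wd a x * (y - fd a x) * (p x * πb a x * pden a x y) ∂ν) μ)
    (hint2 : Integrable (fun x => ∑ a, πe a x * fd a x * q x) μ)
    (hcase : (∀ a x, rd x * wd a x = r x * w a x) ∨ (∀ a x, fd a x = f a x)) :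
    (∫ x, ∑ a, ∫ y, rd x * wd a x * (y - fd a x) * (p x * πb a x * pden a x y) ∂ν ∂μ)
      + (∫ x, ∑ a, πe a x * fd a x * q x ∂μ)
      = ∫ x, ∑ a, πe a x * f a x * q x ∂μ := by
  have hweight : ∀ a x, r x * w a x * (p x * πb a x) = πe a x * q x := fun a x => by
    rw [hr, hw]
    field_simp [(hp x).ne', (hπb a x).ne']
  have hresidual : ∀ a x,
      ∫ y, rd x * wd a x * (y - fd a x) * (p x * πb a x * pden a x y) ∂ν
        = rd x * wd a x * (p x * πb a x) * (f a x - fd a x) := fun a x => by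
    have hfactor : (fun y => rd x * wd a x * (y - fd a x) * (p x * πb a x * pden a x y))
        = fun y => rd x * wd a x * (p x * πb a x) * ((y - fd a x) * pden a x y) := by
      funext y; ring
    rw [hfactor, integral_const_mul, hf,
      integral_sub_mul_of_integral_eq_one (hYint' a x) (hYint a x) (hpden a x).2]
  have hpointwise : ∀ x,
      (∑ a, ∫ y, rd x * wd a x * (y - fd a x) * (p x * πb a x * pden a x y) ∂ν)
        + ∑ a, πe a x * fd a x * q x = ∑ a, πe a x * f a x * q x := fun x => by
    rw [← Finset.sum_add_distrib]
    refine Finset.sum_congr rfl fun a _ => ?_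
    rw [hresidual]
    rcases hcase with hweights | hregression
    · rw [hweights, hweight]; ring
    · rw [hregression]; ring
  rw [← integral_add hint1 hint2]
  exact integral_congr_ae (.of_forall hpointwise)

/-- Doubly robust identity: with `f(a,x) = E[Y|A=a,X=x]` and
`v†(z) = Σ_a π_e(a|z) f†(a,z)`, we have
`E_hist[r† w† (Y − f†)] + E_{Z∼q}[v†(Z)] = R(π_e)` provided either
`r† w† = r w` or `f† = f`. -/
theorem doubly_robust_identity
    {𝒳 : Type*} [MeasurableSpace 𝒳] {A : Type*} [Fintype A]
    (μ : Measure 𝒳) (ν : Measure ℝ)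
    (p q : 𝒳 → ℝ) (πb πe : A → 𝒳 → ℝ) (pden : A → 𝒳 → ℝ → ℝ)
    (hp : ∀ x, 0 < p x) (hq : ∀ x, 0 ≤ q x)
    (hπb : ∀ a x, 0 < πb a x) (hπe : ∀ a x, 0 ≤ πe a x)
    (hpden : ∀ a x, (∀ y, 0 ≤ pden a x y) ∧ (∫ y, pden a x y ∂ν) = 1)
    (r : 𝒳 → ℝ) (hr : ∀ x, r x = q x / p x)
    (w : A → 𝒳 → ℝ) (hw : ∀ a x, w a x = πe a x / πb a x)
    (f : A → 𝒳 → ℝ) (hf : ∀ a x, f a x = ∫ y, y * pden a x y ∂ν)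
    (fd : A → 𝒳 → ℝ) (rd : 𝒳 → ℝ) (wd : A → 𝒳 → ℝ)
    (hYint : ∀ a x, Integrable (fun y => y * pden a x y) ν)
    (hYint' : ∀ a x, Integrable (fun y => pden a x y) ν)
    (hint1 : Integrable
      (fun x => ∑ a, ∫ y, rd x * wd a x * (y - fd a x) * (p x * πb a x * pden a x y) ∂ν) μ)
    (hint2 : Integrable (fun x => ∑ a, πe a x * fd a x * q x) μ)
    (hint3 : Integrable (fun x => ∑ a, πe a x * f a x * q x) μ)
    (hcase : (∀ a x, rd x * wd a x = r x * w a x) ∨ (∀ a x, fd a x = f a x)) :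
    (∫ x, ∑ a, ∫ y, rd x * wd a x * (y - fd a x) * (p x * πb a x * pden a x y) ∂ν ∂μ)
      + (∫ x, ∑ a, πe a x * fd a x * q x ∂μ)
      = ∫ x, ∑ a, πe a x * f a x * q x ∂μ :=
  doubly_robust_identity_general μ ν p q πb πe pden hp hπb hpden r hr w hw f hf fd rd wd hYint
    hYint' hint1 hint2 hcase
end

section
/- The doubly robust bias bound: for bounded estimators r̂, ŵ, f̂ (independent of the data fold) of r, w, f, the absolute bias satisfies |E[r̂(X)ŵ(A,X)(Y − f̂(A,X))] + E_{Z∼q}[v̂(Z)] − R(π_e)| ≤ ‖r̂(X)ŵ(A,X) − r(X)w(A,X)‖₂ · ‖f̂(A,X) − f(A,X)‖₂, where v̂(z)=E_{π_e(a|z)}[f̂(a,z)]. -/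
/-!
The two correction terms combine pointwise into a product of the two estimation errors.
Integrating `Y` against its conditional density turns the first term into
`r̂ ŵ π_b p (f - f̂)`, while the importance weights satisfy `r w p π_b = π_e q`, so the bias
integrand is `-(r̂ ŵ - r w)(f̂ - f) p π_b`. The bound is then the Cauchy–Schwarz inequality in
`L²(p π_b)`, obtained from the discriminant of the nonnegative quadratic
`t ↦ ∫ ∑ₐ (t |r̂ ŵ - r w| - |f̂ - f|)² p π_b`, which needs no measurability assumptions.
-/

open MeasureTheory

theorem integral_sub_mul_of_integral_eq_one_s3 {ν : Measure ℝ} {ρ : ℝ → ℝ}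
    (hmean : Integrable (fun y => y * ρ y) ν) (hρ : Integrable ρ ν)
    (hmass : ∫ y, ρ y ∂ν = 1) (b : ℝ) :
    ∫ y, (y - b) * ρ y ∂ν = (∫ y, y * ρ y ∂ν) - b := by
  simp_rw [sub_mul]
  rw [integral_sub hmean (hρ.const_mul b), integral_const_mul, hmass, mul_one]

theorem quadratic_sum_abs_mul_nonneg {ι : Type*} (s : Finset ι) (g h ρ : ι → ℝ)
    (hρ : ∀ i, 0 ≤ ρ i) (t : ℝ) :
    0 ≤ (∑ i ∈ s, g i ^ 2 * ρ i) * (t * t) + -(2 * ∑ i ∈ s, |g i| * |h i| * ρ i) * t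
      + ∑ i ∈ s, h i ^ 2 * ρ i := by
  have hsq : (∑ i ∈ s, g i ^ 2 * ρ i) * (t * t) + -(2 * ∑ i ∈ s, |g i| * |h i| * ρ i) * t
      + ∑ i ∈ s, h i ^ 2 * ρ i = ∑ i ∈ s, (t * |g i| - |h i|) ^ 2 * ρ i := by
    simp only [Finset.sum_mul, Finset.mul_sum, ← Finset.sum_neg_distrib,
      ← Finset.sum_add_distrib]
    refine Finset.sum_congr rfl fun i _ => ?_
    rw [← sq_abs (g i), ← sq_abs (h i)]
    ring
  rw [hsq]
  exact Finset.sum_nonneg fun i _ => mul_nonneg (sq_nonneg _) (hρ i)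

theorem sq_integral_le_of_forall_quadratic_nonneg {α : Type*} [MeasurableSpace α]
    {μ : Measure α} {F G H : α → ℝ} (hF : Integrable F μ) (hG : Integrable G μ)
    (hH : Integrable H μ) (hquad : ∀ t x, 0 ≤ F x * (t * t) + -(2 * H x) * t + G x) :
    (∫ x, H x ∂μ) ^ 2 ≤ (∫ x, F x ∂μ) * ∫ x, G x ∂μ := by
  have hint : ∀ t, 0 ≤ (∫ x, F x ∂μ) * (t * t) + -(2 * ∫ x, H x ∂μ) * t + ∫ x, G x ∂μ := by
    intro t
    have hFt : Integrable (fun x => F x * (t * t)) μ := hF.mul_const _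
    have hHt : Integrable (fun x => -(2 * H x) * t) μ := (hH.const_mul 2).neg.mul_const t
    have hFHt : Integrable (fun x => F x * (t * t) + -(2 * H x) * t) μ := hFt.add hHt
    calc (0 : ℝ) ≤ ∫ x, F x * (t * t) + -(2 * H x) * t + G x ∂μ :=
          integral_nonneg (hquad t)
      _ = _ := by
        rw [integral_add hFHt hG, integral_add hFt hHt, integral_mul_const,
          integral_mul_const, integral_neg, integral_const_mul]
  have hdisc := discrim_le_zero hint
  rw [discrim] at hdisc
  linarith

theorem abs_integral_sum_mul_le_sqrt_mul_sqrt {α ι : Type*} [MeasurableSpace α] [Fintype ι]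
    {μ : Measure α} (g h ρ : ι → α → ℝ) (hρ : ∀ i x, 0 ≤ ρ i x)
    (hg : Integrable (fun x => ∑ i, g i x ^ 2 * ρ i x) μ)
    (hh : Integrable (fun x => ∑ i, h i x ^ 2 * ρ i x) μ)
    (hgh : Integrable (fun x => ∑ i, |g i x| * |h i x| * ρ i x) μ) :
    |∫ x, ∑ i, g i x * h i x * ρ i x ∂μ|
      ≤ Real.sqrt (∫ x, ∑ i, g i x ^ 2 * ρ i x ∂μ)
        * Real.sqrt (∫ x, ∑ i, h i x ^ 2 * ρ i x ∂μ) := by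
  have htriangle : |∫ x, ∑ i, g i x * h i x * ρ i x ∂μ|
      ≤ ∫ x, ∑ i, |g i x| * |h i x| * ρ i x ∂μ := by
    rw [← Real.norm_eq_abs]
    refine norm_integral_le_of_norm_le hgh (ae_of_all _ fun x => ?_)
    refine (Finset.abs_sum_le_sum_abs _ _).trans_eq (Finset.sum_congr rfl fun i _ => ?_)
    rw [abs_mul, abs_mul, abs_of_nonneg (hρ i x)]
  have hcs := sq_integral_le_of_forall_quadratic_nonneg hg hh hgh
    fun t x => quadratic_sum_abs_mul_nonneg Finset.univ (fun i => g i x) (fun i => h i x)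
      (fun i => ρ i x) (fun i => hρ i x) t
  have hsq_nonneg : 0 ≤ ∫ x, ∑ i, g i x ^ 2 * ρ i x ∂μ :=
    integral_nonneg fun x => Finset.sum_nonneg fun i _ => mul_nonneg (sq_nonneg _) (hρ i x)
  rw [← Real.sqrt_mul hsq_nonneg]
  exact htriangle.trans (Real.le_sqrt_of_sq_le hcs)

theorem doubly_robust_bias_bound_general
    {𝒳 : Type*} [MeasurableSpace 𝒳] {A : Type*} [Fintype A]
    (μ : Measure 𝒳) (ν : Measure ℝ)
    (p q : 𝒳 → ℝ) (πb πe : A → 𝒳 → ℝ) (pden : A → 𝒳 → ℝ → ℝ)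
    (hp : ∀ x, 0 < p x)
    (hπb : ∀ a x, 0 < πb a x)
    (hpden : ∀ a x, (∀ y, 0 ≤ pden a x y) ∧ (∫ y, pden a x y ∂ν) = 1)
    (r : 𝒳 → ℝ) (hr : ∀ x, r x = q x / p x)
    (w : A → 𝒳 → ℝ) (hw : ∀ a x, w a x = πe a x / πb a x)
    (f : A → 𝒳 → ℝ) (hf : ∀ a x, f a x = ∫ y, y * pden a x y ∂ν)
    (rh : 𝒳 → ℝ) (wh fh : A → 𝒳 → ℝ)
    (hYint : ∀ a x, Integrable (fun y => y * pden a x y) ν)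
    (hYint' : ∀ a x, Integrable (fun y => pden a x y) ν)
    (hint1 : Integrable
      (fun x => ∑ a, ∫ y, rh x * wh a x * (y - fh a x) * (p x * πb a x * pden a x y) ∂ν) μ)
    (hint2 : Integrable (fun x => ∑ a, πe a x * fh a x * q x) μ)
    (hint3 : Integrable (fun x => ∑ a, πe a x * f a x * q x) μ)
    (hint4 : Integrable (fun x => ∑ a, (rh x * wh a x - r x * w a x)^2 * (p x * πb a x)) μ)
    (hint5 : Integrable (fun x => ∑ a, (fh a x - f a x)^2 * (p x * πb a x)) μ)
    (hint6 : Integrable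
      (fun x => ∑ a, |rh x * wh a x - r x * w a x| * |fh a x - f a x| * (p x * πb a x)) μ) :
    |(∫ x, ∑ a, ∫ y, rh x * wh a x * (y - fh a x) * (p x * πb a x * pden a x y) ∂ν ∂μ)
        + (∫ x, ∑ a, πe a x * fh a x * q x ∂μ)
        - ∫ x, ∑ a, πe a x * f a x * q x ∂μ|
      ≤ Real.sqrt (∫ x, ∑ a, (rh x * wh a x - r x * w a x)^2 * (p x * πb a x) ∂μ)
        * Real.sqrt (∫ x, ∑ a, (fh a x - f a x)^2 * (p x * πb a x) ∂μ) := by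
  have hweight : ∀ a x, r x * w a x * (p x * πb a x) = πe a x * q x := fun a x => by
    rw [hr, hw]
    field_simp [(hp x).ne', (hπb a x).ne']
  have hinner : ∀ a x,
      ∫ y, rh x * wh a x * (y - fh a x) * (p x * πb a x * pden a x y) ∂ν
        = rh x * wh a x * (p x * πb a x) * (f a x - fh a x) := fun a x => by
    rw [hf, ← integral_sub_mul_of_integral_eq_one_s3 (hYint a x) (hYint' a x) (hpden a x).2,
      ← integral_const_mul]
    exact integral_congr_ae (ae_of_all _ fun y => by ring)
  have hpointwise : ∀ x,
      (∑ a, ∫ y, rh x * wh a x * (y - fh a x) * (p x * πb a x * pden a x y) ∂ν)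
        + ∑ a, πe a x * fh a x * q x - ∑ a, πe a x * f a x * q x
      = -∑ a, (rh x * wh a x - r x * w a x) * (fh a x - f a x) * (p x * πb a x) := fun x => by
    rw [← Finset.sum_add_distrib, ← Finset.sum_sub_distrib, ← Finset.sum_neg_distrib]
    refine Finset.sum_congr rfl fun a _ => ?_
    rw [hinner]
    linear_combination (f a x - fh a x) * hweight a x
  have hint12 : Integrable (fun x =>
      (∑ a, ∫ y, rh x * wh a x * (y - fh a x) * (p x * πb a x * pden a x y) ∂ν)
        + ∑ a, πe a x * fh a x * q x) μ := hint1.add hint2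
  rw [← integral_add hint1 hint2, ← integral_sub hint12 hint3,
    integral_congr_ae (ae_of_all _ hpointwise), integral_neg, abs_neg]
  exact abs_integral_sum_mul_le_sqrt_mul_sqrt _ _ (fun a x => p x * πb a x)
    (fun a x => (mul_pos (hp x) (hπb a x)).le) hint4 hint5 hint6

/-- Doubly robust bias bound: for bounded (data-independent)
estimators `rh, wh, fh` of `r, w, f`,
`|E[rh·wh·(Y − fh)] + E_{Z∼q}[vh(Z)] − R(π_e)|
   ≤ ‖rh·wh − r·w‖₂ · ‖fh − f‖₂`,
where `vh(z) = Σ_a π_e(a|z) fh(a,z)` and `‖·‖₂` is the L² norm under the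
historical distribution `p(x) π_b(a|x) p(y|a,x)`. -/
theorem doubly_robust_bias_bound
    {𝒳 : Type*} [MeasurableSpace 𝒳] {A : Type*} [Fintype A]
    (μ : Measure 𝒳) (ν : Measure ℝ)
    (p q : 𝒳 → ℝ) (πb πe : A → 𝒳 → ℝ) (pden : A → 𝒳 → ℝ → ℝ)
    (hp : ∀ x, 0 < p x) (hq : ∀ x, 0 ≤ q x)
    (hπb : ∀ a x, 0 < πb a x) (hπe : ∀ a x, 0 ≤ πe a x)
    (hpden : ∀ a x, (∀ y, 0 ≤ pden a x y) ∧ (∫ y, pden a x y ∂ν) = 1)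
    (r : 𝒳 → ℝ) (hr : ∀ x, r x = q x / p x)
    (w : A → 𝒳 → ℝ) (hw : ∀ a x, w a x = πe a x / πb a x)
    (f : A → 𝒳 → ℝ) (hf : ∀ a x, f a x = ∫ y, y * pden a x y ∂ν)
    (rh : 𝒳 → ℝ) (wh fh : A → 𝒳 → ℝ)
    (C : ℝ) (hbdd : ∀ a x, |rh x| ≤ C ∧ |wh a x| ≤ C ∧ |fh a x| ≤ C ∧ |f a x| ≤ C)
    (hYint : ∀ a x, Integrable (fun y => y * pden a x y) ν)
    (hYint' : ∀ a x, Integrable (fun y => pden a x y) ν)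
    (hint1 : Integrable
      (fun x => ∑ a, ∫ y, rh x * wh a x * (y - fh a x) * (p x * πb a x * pden a x y) ∂ν) μ)
    (hint2 : Integrable (fun x => ∑ a, πe a x * fh a x * q x) μ)
    (hint3 : Integrable (fun x => ∑ a, πe a x * f a x * q x) μ)
    (hint4 : Integrable (fun x => ∑ a, (rh x * wh a x - r x * w a x)^2 * (p x * πb a x)) μ)
    (hint5 : Integrable (fun x => ∑ a, (fh a x - f a x)^2 * (p x * πb a x)) μ)
    (hint6 : Integrable
      (fun x => ∑ a, |rh x * wh a x - r x * w a x| * |fh a x - f a x| * (p x * πb a x)) μ) :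
    |(∫ x, ∑ a, ∫ y, rh x * wh a x * (y - fh a x) * (p x * πb a x * pden a x y) ∂ν ∂μ)
        + (∫ x, ∑ a, πe a x * fh a x * q x ∂μ)
        - ∫ x, ∑ a, πe a x * f a x * q x ∂μ|
      ≤ Real.sqrt (∫ x, ∑ a, (rh x * wh a x - r x * w a x)^2 * (p x * πb a x) ∂μ)
        * Real.sqrt (∫ x, ∑ a, (fh a x - f a x)^2 * (p x * πb a x) ∂μ) :=
  doubly_robust_bias_bound_general μ ν p q πb πe pden hp hπb hpden r hr w hw f hf rh wh fh hYint
    hYint' hint1 hint2 hint3 hint4 hint5 hint6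
end

section
/- Cramér–Rao bound component for the reward model: under a regular parametric submodel p(y|a,x;θ₁) with score s(y,a,x) = ∇_{θ₁} log p(y|a,x;θ₁) satisfying E[s|A,X]=0, the quantity A₁ B₁^{−1} A₁ᵀ, where A₁ = E[r(X)w(A,X)·Y·sᵀ] and B₁ = E[s sᵀ], satisfies A₁ B₁^{−1} A₁ᵀ ≤ E[r²(X)w²(A,X)·Var[Y|A,X]]. -/
/-!
Since `E[s | A, X] = 0`, the part `r w E[Y | A, X]` of `r w Y`, being a function of `(A, X)`, is
orthogonal to every score component, so `A₁ = E[U sᵀ]` with `U = r(X) w(A, X) (Y - E[Y | A, X])`.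
Pulling the `(A, X)`-measurable factor `(r w)²` out of the conditional variance gives
`E[r² w² Var[Y | A, X]] = E[U²]`, and the claim is the matrix Cauchy–Schwarz inequality
`E[U sᵀ] E[s sᵀ]⁻¹ E[s U] ≤ E[U²]` in `L²`.
-/

open MeasureTheory Matrix

section GramMatrix

variable {E : Type*} [NormedAddCommGroup E] [InnerProductSpace ℝ E]
  {ι : Type*} [Fintype ι] [DecidableEq ι]

/-- Bessel's inequality for a finite family with invertible Gram matrix `B`: the left side is the
squared norm of the orthogonal projection of `u` onto the span of `v`. -/
theorem dotProduct_inv_gram_mulVec_le_norm_sq (u : E) (v : ι → E) (B : Matrix ι ι ℝ)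
    (hB : ∀ i j, B i j = inner ℝ (v i) (v j)) (hB_det : IsUnit B.det) :
    (fun i => inner ℝ u (v i)) ⬝ᵥ B⁻¹ *ᵥ (fun i => inner ℝ u (v i)) ≤ ‖u‖ ^ 2 := by
  set a : ι → ℝ := fun i => inner ℝ u (v i)
  set c := B⁻¹ *ᵥ a
  set p := ∑ i, c i • v i
  have hBc : B *ᵥ c = a := by
    rw [mulVec_mulVec, mul_nonsing_inv _ hB_det, one_mulVec]
  have hup : inner ℝ u p = a ⬝ᵥ c := by
    simp only [p, inner_sum, real_inner_smul_right, dotProduct, a, mul_comm]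
  have hpp : ‖p‖ ^ 2 = a ⬝ᵥ c := by
    rw [← real_inner_self_eq_norm_sq, ← hBc, dotProduct_comm]
    simp only [p, sum_inner, inner_sum, real_inner_smul_left, real_inner_smul_right, dotProduct,
      mulVec, hB, Finset.mul_sum]
    exact Finset.sum_congr rfl fun i _ => Finset.sum_congr rfl fun j _ => by
      rw [real_inner_comm]; ring
  nlinarith [norm_sub_sq_real u p, sq_nonneg ‖u - p‖]

end GramMatrix

section L2

variable {Ω : Type*} {m₀ : MeasurableSpace Ω} {μ : Measure Ω}

theorem integral_mul_eq_inner_toLp {f g : Ω → ℝ} (hf : MemLp f 2 μ) (hg : MemLp g 2 μ) :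
    ∫ ω, f ω * g ω ∂μ = inner ℝ (hf.toLp f) (hg.toLp g) := by
  rw [L2.inner_def]
  refine integral_congr_ae ?_
  filter_upwards [hf.coeFn_toLp, hg.coeFn_toLp] with ω hfω hgω
  simp [hfω, hgω, mul_comm]

theorem dotProduct_inv_mulVec_le_integral_sq {ι : Type*} [Fintype ι] [DecidableEq ι]
    {U : Ω → ℝ} (hU : MemLp U 2 μ) {s : Ω → ι → ℝ} (hs : ∀ i, MemLp (fun ω => s ω i) 2 μ)
    (B : Matrix ι ι ℝ) (hB : ∀ i j, B i j = ∫ ω, s ω i * s ω j ∂μ) (hB_det : IsUnit B.det)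
    (a : ι → ℝ) (ha : ∀ i, a i = ∫ ω, U ω * s ω i ∂μ) :
    a ⬝ᵥ B⁻¹ *ᵥ a ≤ ∫ ω, U ω ^ 2 ∂μ := by
  have ha' : a = fun i => inner ℝ (hU.toLp U) ((hs i).toLp _) := by
    ext i; rw [ha, integral_mul_eq_inner_toLp]
  have hU2 : ∫ ω, U ω ^ 2 ∂μ = ‖hU.toLp U‖ ^ 2 := by
    simp_rw [sq, integral_mul_eq_inner_toLp hU hU, real_inner_self_eq_norm_sq, sq]
  rw [ha', hU2]
  exact dotProduct_inv_gram_mulVec_le_norm_sq _ _ B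
    (fun i j => by rw [hB, integral_mul_eq_inner_toLp]) hB_det

end L2

section CondExp

open ProbabilityTheory

variable {Ω : Type*} {m m₀ : MeasurableSpace Ω} {μ : Measure Ω}

theorem integral_mul_condExp_of_stronglyMeasurable (hm : m ≤ m₀) [SigmaFinite (μ.trim hm)]
    {g f : Ω → ℝ} (hg : StronglyMeasurable[m] g) (hgf : Integrable (g * f) μ)
    (hf : Integrable f μ) :
    ∫ ω, g ω * μ[f | m] ω ∂μ = ∫ ω, g ω * f ω ∂μ :=
  calc ∫ ω, g ω * μ[f | m] ω ∂μ = ∫ ω, μ[g * f | m] ω ∂μ :=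
        integral_congr_ae (condExp_mul_of_stronglyMeasurable_left hg hgf hf).symm
    _ = ∫ ω, g ω * f ω ∂μ := integral_condExp hm

variable [IsFiniteMeasure μ]

/-- An `m`-measurable multiple of `E[Y | m]` is orthogonal to every `s` with `E[s | m] = 0`. -/
theorem integral_mul_mul_eq_integral_mul_sub_condExp_mul (hm : m ≤ m₀) {g Y s : Ω → ℝ}
    (hg : StronglyMeasurable[m] g) (hg_top : MemLp g ⊤ μ) (hY : MemLp Y 2 μ)
    (hs : MemLp s 2 μ) (hs0 : μ[s | m] =ᵐ[μ] 0) :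
    ∫ ω, g ω * Y ω * s ω ∂μ = ∫ ω, g ω * (Y ω - μ[Y | m] ω) * s ω ∂μ := by
  have hYm : MemLp (μ[Y | m]) 2 μ := hY.condExp one_le_two
  have hgYm : MemLp (g * μ[Y | m]) 2 μ := hYm.mul hg_top
  have hU : MemLp (g * (Y - μ[Y | m])) 2 μ := (hY.sub hYm).mul hg_top
  have hUs : Integrable (fun ω => g ω * (Y ω - μ[Y | m] ω) * s ω) μ := hU.integrable_mul hs
  have hgYms : Integrable (fun ω => g ω * μ[Y | m] ω * s ω) μ := hgYm.integrable_mul hs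
  have horth : ∫ ω, g ω * μ[Y | m] ω * s ω ∂μ = 0 := by
    change ∫ ω, (g * μ[Y | m]) ω * s ω ∂μ = 0
    rw [← integral_mul_condExp_of_stronglyMeasurable hm (hg.mul stronglyMeasurable_condExp)
      hgYms (hs.integrable one_le_two)]
    refine integral_eq_zero_of_ae ?_
    filter_upwards [hs0] with ω hω
    simp [hω]
  calc ∫ ω, g ω * Y ω * s ω ∂μ
      = ∫ ω, (g ω * (Y ω - μ[Y | m] ω) * s ω + g ω * μ[Y | m] ω * s ω) ∂μ := by
        congr 1; ext ω; ring
    _ = ∫ ω, g ω * (Y ω - μ[Y | m] ω) * s ω ∂μ := by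
        rw [integral_add hUs hgYms, horth, add_zero]

theorem integral_sq_mul_condVar (hm : m ≤ m₀) {g Y : Ω → ℝ}
    (hg : StronglyMeasurable[m] g) (hg_top : MemLp g ⊤ μ) (hY : MemLp Y 2 μ) :
    ∫ ω, g ω ^ 2 * Var[Y; μ | m] ω ∂μ = ∫ ω, (g ω * (Y ω - μ[Y | m] ω)) ^ 2 ∂μ := by
  have hD : MemLp (Y - μ[Y | m]) 2 μ := hY.sub (hY.condExp one_le_two)
  have hU : MemLp (g * (Y - μ[Y | m])) 2 μ := hD.mul hg_top
  have hsq : ∀ ω, (g ω * (Y ω - μ[Y | m] ω)) ^ 2 = g ω ^ 2 * (Y ω - μ[Y | m] ω) ^ 2 :=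
    fun ω => mul_pow _ _ _
  simp_rw [hsq]
  exact integral_mul_condExp_of_stronglyMeasurable hm (hg.pow 2)
    (hU.integrable_sq.congr (.of_forall hsq)) hD.integrable_sq

end CondExp

theorem cr_bound_reward_model_general {Ω : Type*} [mΩ : MeasurableSpace Ω]
    {𝒳 : Type*} [MeasurableSpace 𝒳] {A : Type*} [MeasurableSpace A]
    (P : Measure Ω) [IsProbabilityMeasure P] {d : ℕ}
    (Xv : Ω → 𝒳) (Av : Ω → A) (Y : Ω → ℝ)
    (hY : MemLp Y 2 P)
    (r : 𝒳 → ℝ) (w : A → 𝒳 → ℝ)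
    (hrm : Measurable r) (hwm : Measurable (Function.uncurry w))
    (Crw : ℝ) (hrw : ∀ a x, |r x * w a x| ≤ Crw)
    (mAX : MeasurableSpace Ω)
    (hmAX : mAX = MeasurableSpace.comap (fun ω => (Av ω, Xv ω)) inferInstance)
    (hle : mAX ≤ mΩ)
    (s : Ω → Fin d → ℝ)
    (hs : ∀ i, MemLp (fun ω => s ω i) 2 P)
    (hscond : ∀ i, P[(fun ω => s ω i)|mAX] =ᵐ[P] (fun _ => (0 : ℝ)))
    (B₁ : Matrix (Fin d) (Fin d) ℝ) (hB₁ : ∀ i j, B₁ i j = ∫ ω, s ω i * s ω j ∂P)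
    (hB₁inv : IsUnit B₁.det)
    (A₁ : Fin d → ℝ)
    (hA₁ : ∀ i, A₁ i = ∫ ω, r (Xv ω) * w (Av ω) (Xv ω) * Y ω * s ω i ∂P) :
    A₁ ⬝ᵥ B₁⁻¹.mulVec A₁
      ≤ ∫ ω, (r (Xv ω) * w (Av ω) (Xv ω))^2
          * (P[(fun ω' => (Y ω' - (P[Y|mAX]) ω')^2)|mAX]) ω ∂P := by
  set g : Ω → ℝ := fun ω => r (Xv ω) * w (Av ω) (Xv ω)
  have hAX : Measurable[mAX] fun ω => (Av ω, Xv ω) := measurable_iff_comap_le.mpr hmAX.ge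
  have hg : StronglyMeasurable[mAX] g :=
    (((hrm.comp measurable_snd).mul hwm).comp hAX).stronglyMeasurable
  have hg_top : MemLp g ⊤ P :=
    memLp_top_of_bound (hg.mono hle).aestronglyMeasurable Crw
      (.of_forall fun ω => (Real.norm_eq_abs _).trans_le (hrw (Av ω) (Xv ω)))
  have hA₁' : ∀ i, A₁ i = ∫ ω, g ω * (Y ω - P[Y | mAX] ω) * s ω i ∂P := fun i =>
    (hA₁ i).trans <|
      integral_mul_mul_eq_integral_mul_sub_condExp_mul hle hg hg_top hY (hs i) (hscond i)
  have hU : MemLp (fun ω => g ω * (Y ω - P[Y | mAX] ω)) 2 P :=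
    (hY.sub (hY.condExp (m := mAX) one_le_two)).mul' hg_top
  calc A₁ ⬝ᵥ B₁⁻¹ *ᵥ A₁ ≤ ∫ ω, (g ω * (Y ω - P[Y | mAX] ω)) ^ 2 ∂P :=
        dotProduct_inv_mulVec_le_integral_sq hU hs B₁ hB₁ hB₁inv A₁ hA₁'
    _ = ∫ ω, g ω ^ 2 * ProbabilityTheory.condVar mAX Y P ω ∂P :=
        (integral_sq_mul_condVar hle hg hg_top hY).symm

/-- Cramér–Rao bound component for the reward model: for a score
`s` with `E[s | A, X] = 0` and `B₁ = E[s sᵀ]` invertible, the quantity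
`A₁ B₁⁻¹ A₁ᵀ` with `A₁ = E[r(X) w(A,X) Y sᵀ]` satisfies
`A₁ B₁⁻¹ A₁ᵀ ≤ E[r²(X) w²(A,X) Var[Y | A, X]]`. -/
theorem cr_bound_reward_model {Ω : Type*} [mΩ : MeasurableSpace Ω]
    {𝒳 : Type*} [MeasurableSpace 𝒳] {A : Type*} [MeasurableSpace A]
    (P : Measure Ω) [IsProbabilityMeasure P] {d : ℕ}
    (Xv : Ω → 𝒳) (Av : Ω → A) (Y : Ω → ℝ)
    (hXv : Measurable Xv) (hAv : Measurable Av)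
    (hY : MemLp Y 2 P)
    (r : 𝒳 → ℝ) (w : A → 𝒳 → ℝ)
    (hrm : Measurable r) (hwm : Measurable (Function.uncurry w))
    (Crw : ℝ) (hrw : ∀ a x, |r x * w a x| ≤ Crw)
    (mAX : MeasurableSpace Ω)
    (hmAX : mAX = MeasurableSpace.comap (fun ω => (Av ω, Xv ω)) inferInstance)
    (hle : mAX ≤ mΩ)
    (s : Ω → Fin d → ℝ)
    (hs : ∀ i, MemLp (fun ω => s ω i) 2 P)
    (hscond : ∀ i, P[(fun ω => s ω i)|mAX] =ᵐ[P] (fun _ => (0 : ℝ)))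
    (B₁ : Matrix (Fin d) (Fin d) ℝ) (hB₁ : ∀ i j, B₁ i j = ∫ ω, s ω i * s ω j ∂P)
    (hB₁inv : IsUnit B₁.det)
    (A₁ : Fin d → ℝ)
    (hA₁ : ∀ i, A₁ i = ∫ ω, r (Xv ω) * w (Av ω) (Xv ω) * Y ω * s ω i ∂P) :
    A₁ ⬝ᵥ B₁⁻¹.mulVec A₁
      ≤ ∫ ω, (r (Xv ω) * w (Av ω) (Xv ω))^2
          * (P[(fun ω' => (Y ω' - (P[Y|mAX]) ω')^2)|mAX]) ω ∂P :=
  cr_bound_reward_model_general (mΩ := mΩ) P Xv Av Y hY r w hrm hwm Crw hrw mAX hmAX hle s hs hscond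
    B₁ hB₁ hB₁inv A₁ hA₁
end

section
/- Asymptotic variance ordering of IPW estimators: ρ^{−1}·Var[r(X)(w(A,X)Y − v(X))] + (1−ρ)^{−1}·Var[v(Z)] ≥ ρ^{−1}·E[r²(X)w²(A,X)·Var[Y|A,X]] + (1−ρ)^{−1}·Var[v(Z)], i.e., the asymptotic MSE of the IPW estimator with known behavior policy (IPWCSB) is at least the efficiency bound achieved by the fully nonparametric IPW estimator (IPWCS); equivalently, Var[r(X)(w(A,X)Y − v(X))] ≥ E[r²(X)w²(A,X)Var[Y|A,X]]. -/
open MeasureTheory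

/-- Asymptotic variance ordering of IPW estimators:
`ρ⁻¹ Var[r(X)(w(A,X) Y − v(X))] + (1−ρ)⁻¹ Var[v(Z)]
   ≥ ρ⁻¹ E[r²(X) w²(A,X) Var[Y|A,X]] + (1−ρ)⁻¹ Var[v(Z)]`,
i.e. the asymptotic MSE of IPWCSB is at least the efficiency bound.
All historical expectations are written over the density
`p(x) π_b(a|x) p(y|a,x)` and `VV` stands for `Var[v(Z)]`. -/
theorem ipw_variance_ordering
    {𝒳 : Type*} [MeasurableSpace 𝒳] {A : Type*} [Fintype A]
    (μ : Measure 𝒳) (ν : Measure ℝ)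
    (p : 𝒳 → ℝ) (πb πe : A → 𝒳 → ℝ) (pden : A → 𝒳 → ℝ → ℝ)
    (r : 𝒳 → ℝ) (w f : A → 𝒳 → ℝ) (v : 𝒳 → ℝ)
    (hp : ∀ x, 0 ≤ p x)
    (hπb : ∀ a x, 0 < πb a x) (hπbsum : ∀ x, ∑ a, πb a x = 1)
    (hπe : ∀ a x, 0 ≤ πe a x)
    (hpden : ∀ a x, (∀ y, 0 ≤ pden a x y) ∧ (∫ y, pden a x y ∂ν) = 1)
    (hw : ∀ a x, w a x = πe a x / πb a x)
    (hf : ∀ a x, f a x = ∫ y, y * pden a x y ∂ν)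
    (hv : ∀ x, v x = ∑ a, πe a x * f a x)
    (hIy : ∀ a x, Integrable (fun y => y * pden a x y) ν)
    (hIy2 : ∀ a x, Integrable (fun y => y ^ 2 * pden a x y) ν)
    (hI1 : Integrable
      (fun x => (∑ a, πb a x * ∫ y, (r x * (w a x * y - v x))^2 * pden a x y ∂ν) * p x) μ)
    (hI2 : Integrable
      (fun x => (∑ a, πb a x * ((r x)^2 * (w a x)^2 * ∫ y, (y - f a x)^2 * pden a x y ∂ν)) * p x) μ)
    (ρ : ℝ) (hρ : 0 < ρ ∧ ρ < 1) (VV : ℝ) :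
    ρ⁻¹ * ((∫ x, (∑ a, πb a x * ((r x)^2 * (w a x)^2
              * ∫ y, (y - f a x)^2 * pden a x y ∂ν)) * p x ∂μ))
        + (1 - ρ)⁻¹ * VV
      ≤ ρ⁻¹ * ((∫ x, (∑ a, πb a x * ∫ y, (r x * (w a x * y - v x))^2 * pden a x y ∂ν) * p x ∂μ)
              - (∫ x, (∑ a, πb a x * ∫ y, (r x * (w a x * y - v x)) * pden a x y ∂ν) * p x ∂μ)^2)
        + (1 - ρ)⁻¹ * VV := by
  obtain ⟨hρ0, hρ1⟩ := hρ
  -- pden is integrable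
  have hIp : ∀ a x, Integrable (pden a x) ν := by
    intro a x
    by_contra h
    have h2 := (hpden a x).2
    rw [integral_undef h] at h2
    norm_num at h2
  -- mean integrand is pointwise zero
  have hmean : ∀ x, (∑ a, πb a x * ∫ y, (r x * (w a x * y - v x)) * pden a x y ∂ν) = 0 := by
    intro x
    have hint : ∀ a, (∫ y, (r x * (w a x * y - v x)) * pden a x y ∂ν)
        = r x * w a x * f a x - r x * v x := by
      intro a
      have he : (fun y => (r x * (w a x * y - v x)) * pden a x y)
          = fun y => (r x * w a x) * (y * pden a x y) - (r x * v x) * pden a x y := by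
        funext y; ring
      have i1 : Integrable (fun y => (r x * w a x) * (y * pden a x y)) ν :=
        (hIy a x).const_mul _
      have i2 : Integrable (fun y => (r x * v x) * pden a x y) ν := (hIp a x).const_mul _
      rw [he, integral_sub i1 i2, integral_const_mul, integral_const_mul, hf,
        (hpden a x).2, mul_one]
    have hterm : ∀ a ∈ Finset.univ, πb a x * (∫ y, (r x * (w a x * y - v x)) * pden a x y ∂ν)
        = r x * (πe a x * f a x) - πb a x * (r x * v x) := by
      intro a _
      rw [hint a, hw]
      have hb := (hπb a x).ne'
      field_simp
    rw [Finset.sum_congr rfl hterm, Finset.sum_sub_distrib, ← Finset.mul_sum, ← hv,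
      ← Finset.sum_mul, hπbsum]
    ring
  have h0 : (∫ x, (∑ a, πb a x * ∫ y, (r x * (w a x * y - v x)) * pden a x y ∂ν) * p x ∂μ)
      = 0 := by
    simp only [hmean, zero_mul, integral_zero]
  rw [h0]
  have hρinv : (0:ℝ) ≤ ρ⁻¹ := by positivity
  have hmain : (∫ x, (∑ a, πb a x * ((r x)^2 * (w a x)^2
          * ∫ y, (y - f a x)^2 * pden a x y ∂ν)) * p x ∂μ)
      ≤ (∫ x, (∑ a, πb a x * ∫ y, (r x * (w a x * y - v x))^2 * pden a x y ∂ν) * p x ∂μ) := by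
    apply integral_mono hI2 hI1
    intro x
    apply mul_le_mul_of_nonneg_right _ (hp x)
    apply Finset.sum_le_sum
    intro a _
    apply mul_le_mul_of_nonneg_left _ (hπb a x).le
    set S := ∫ y, y^2 * pden a x y ∂ν with hS
    have hvar : (∫ y, (y - f a x)^2 * pden a x y ∂ν) = S - (f a x)^2 := by
      have he : (fun y => (y - f a x)^2 * pden a x y)
          = fun y => (y^2 * pden a x y) - (2 * f a x) * (y * pden a x y)
              + (f a x)^2 * pden a x y := by
        funext y; ring
      have i1 : Integrable (fun y => y^2 * pden a x y - (2 * f a x) * (y * pden a x y)) ν := by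
        exact (hIy2 a x).sub ((hIy a x).const_mul _)
      have i2 : Integrable (fun y => (f a x)^2 * pden a x y) ν := (hIp a x).const_mul _
      have i3 : Integrable (fun y => (2 * f a x) * (y * pden a x y)) ν := (hIy a x).const_mul _
      rw [he, integral_add i1 i2, integral_sub (hIy2 a x) i3,
        integral_const_mul, integral_const_mul, ← hf, (hpden a x).2]
      ring
    have hsq : (∫ y, (r x * (w a x * y - v x))^2 * pden a x y ∂ν)
        = (r x)^2 * (w a x)^2 * S - 2 * (r x)^2 * w a x * v x * f a x
            + (r x)^2 * (v x)^2 := by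
      have he : (fun y => (r x * (w a x * y - v x))^2 * pden a x y)
          = fun y => ((r x)^2 * (w a x)^2) * (y^2 * pden a x y)
              - (2 * (r x)^2 * w a x * v x) * (y * pden a x y)
              + ((r x)^2 * (v x)^2) * pden a x y := by
        funext y; ring
      have j1 : Integrable (fun y => ((r x)^2 * (w a x)^2) * (y^2 * pden a x y)
          - (2 * (r x)^2 * w a x * v x) * (y * pden a x y)) ν := by
        exact ((hIy2 a x).const_mul _).sub ((hIy a x).const_mul _)
      have j2 : Integrable (fun y => ((r x)^2 * (v x)^2) * pden a x y) ν :=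
        (hIp a x).const_mul _
      have j3 : Integrable (fun y => ((r x)^2 * (w a x)^2) * (y^2 * pden a x y)) ν :=
        (hIy2 a x).const_mul _
      have j4 : Integrable (fun y => (2 * (r x)^2 * w a x * v x) * (y * pden a x y)) ν :=
        (hIy a x).const_mul _
      rw [he, integral_add j1 j2, integral_sub j3 j4,
        integral_const_mul, integral_const_mul, integral_const_mul, ← hf, (hpden a x).2]
      ring
    rw [hvar, hsq]
    nlinarith [sq_nonneg (r x * (w a x * f a x - v x))]
  nlinarith [hmain]
end
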